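/- Let ω = (ω_1,...,ω_k) be a basis of a subspace W ⊆ R^{1×ℓ}⟨x,x*⟩, I ⊆ R^{1×ℓ}⟨x,x*⟩ a left module, and Z = {C ∈ S^k : ω*Cω ∈ R^{ℓ×1}I + I*R^{1×ℓ}}. A symmetric matrix A ∈ S^k is the noncommutative Hankel matrix (L(ω_i*ω_j))_{i,j} of some symmetric linear functional L on W*W vanishing on (R^{ℓ×1}I + I*R^{1×ℓ}) ∩ W*W if and only if A ∈ Z^⊥; in that case L(ω*Cω) = Tr(AC) for every C ∈ ℝ^{k×k}. -/

import Mathlib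

open scoped BigOperators
open Matrix

namespace NSS

/-- Words in the `2g` free letters `x_1,…,x_g,x_1^*,…,x_g^*`
(a letter is a pair of an index and a `Bool`: `false` = unstarred, `true` = starred). -/
abbrev Word (g : ℕ) := FreeMonoid (Fin g × Bool)

/-- The free `*`-algebra `ℝ⟨x,x*⟩`. -/
abbrev NC (g : ℕ) := MonoidAlgebra ℝ (Word g)

/-- `ν × ℓ` matrices of noncommutative polynomials. -/
abbrev NCMat (g ν ℓ : ℕ) := Matrix (Fin ν) (Fin ℓ) (NC g)

/-- The involution on words: reverse the word and swap starred/unstarred letters. -/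
def wordStar {g : ℕ} (w : Word g) : Word g :=
  FreeMonoid.ofList (((FreeMonoid.toList w).map (fun p => (p.1, !p.2))).reverse)

/-- The involution on `ℝ⟨x,x*⟩`. -/
noncomputable def ncStar {g : ℕ} (p : NC g) : NC g :=
  MonoidAlgebra.ofCoeff (Finsupp.mapDomain wordStar (p.coeff : Word g →₀ ℝ))

/-- The involution on matrix polynomials: transpose and apply `ncStar` entrywise. -/
noncomputable def matStar {g ν ℓ : ℕ} (p : NCMat g ν ℓ) : NCMat g ℓ ν :=
  Matrix.of fun i j => ncStar (p j i)

/-- The left action of a scalar polynomial on a matrix polynomial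
(entrywise left multiplication, identifying `q` with `I ⊗ q`). -/
noncomputable def leftMul {g ν ℓ : ℕ} (q : NC g) (p : NCMat g ν ℓ) : NCMat g ν ℓ :=
  Matrix.of fun i j => q * p i j

/-- A constant real matrix, viewed as a matrix of noncommutative polynomials. -/
noncomputable def constMat {g m n : ℕ} (A : Matrix (Fin m) (Fin n) ℝ) : NCMat g m n :=
  A.map (algebraMap ℝ (NC g))

/-- The space `ℝ^{ℓ×1}·I + I^*·ℝ^{1×ℓ}`. -/
noncomputable def realPart {g ℓ : ℕ} (I : Set (NCMat g 1 ℓ)) : Submodule ℝ (NCMat g ℓ ℓ) :=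
  Submodule.span ℝ
    ({m | ∃ B : Matrix (Fin ℓ) (Fin 1) ℝ, ∃ a ∈ I, m = constMat B * a} ∪
     {m | ∃ B : Matrix (Fin 1) (Fin ℓ) ℝ, ∃ a ∈ I, m = matStar a * constMat B})

/-- Left `ℝ⟨x,x*⟩`-submodules of `ℝ^{1×ℓ}⟨x,x*⟩`. -/
def IsLeftSubmodule {g ℓ : ℕ} (I : Set (NCMat g 1 ℓ)) : Prop :=
  0 ∈ I ∧ (∀ a b, a ∈ I → b ∈ I → a + b ∈ I) ∧
    (∀ (r : ℝ) a, a ∈ I → r • a ∈ I) ∧ ∀ (q : NC g) a, a ∈ I → leftMul q a ∈ I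

/-- A left module `I` is *real* if any finite sum of hermitian squares lying in
`ℝ^{ℓ×1}·I + I^*·ℝ^{1×ℓ}` has all its terms in `I`. -/
def IsReal {g ℓ : ℕ} (I : Set (NCMat g 1 ℓ)) : Prop :=
  ∀ (n : ℕ) (p : Fin n → NCMat g 1 ℓ),
    (∑ i, matStar (p i) * p i) ∈ realPart I → ∀ i, p i ∈ I

/-- The monomial `e_j ⊗ w ∈ ℝ^{1×ℓ}⟨x,x*⟩`. -/
noncomputable def rowMono {g ℓ : ℕ} (j : Fin ℓ) (w : Word g) : NCMat g 1 ℓ :=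
  Matrix.of fun _ j' => if j' = j then (MonoidAlgebra.single w (1:ℝ) : NC g) else 0

/-- The left `ℝ⟨x,x*⟩`-submodule generated by a set. -/
def leftSpan {g ℓ : ℕ} (G : Set (NCMat g 1 ℓ)) : Set (NCMat g 1 ℓ) :=
  ⋂₀ {J | IsLeftSubmodule J ∧ G ⊆ J}


/-- `W*W`: the span of products `a*·b` with `a, b ∈ W = span(ω)`. -/
noncomputable def WW {g ℓ k : ℕ} (ω : Fin k → NCMat g 1 ℓ) : Submodule ℝ (NCMat g ℓ ℓ) :=
  Submodule.span ℝ
    {m | ∃ a ∈ Submodule.span ℝ (Set.range ω), ∃ b ∈ Submodule.span ℝ (Set.range ω),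
      m = matStar a * b}

lemma mem_WW {g ℓ k : ℕ} (ω : Fin k → NCMat g 1 ℓ) (i j : Fin k) :
    matStar (ω i) * ω j ∈ WW ω :=
  Submodule.subset_span
    ⟨ω i, Submodule.subset_span (Set.mem_range_self i),
     ω j, Submodule.subset_span (Set.mem_range_self j), rfl⟩

/-- `ω*Cω = Σ_{i,j} C i j • (ω_i* ω_j)`. -/
noncomputable def omegaC {g ℓ k : ℕ} (ω : Fin k → NCMat g 1 ℓ)
    (C : Matrix (Fin k) (Fin k) ℝ) : NCMat g ℓ ℓ :=
  ∑ i, ∑ j, C i j • (matStar (ω i) * ω j)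


/-!
Every element of `W*W` has the form `ω*Cω` and `C ↦ ω*Cω` is linear, so functionals on `W*W` are
the functionals on `k × k` matrices vanishing on the kernel of this map, and the Hankel condition
pins such a functional down to `C ↦ Tr(AC)`. As `(ω*Cω)* = ω*Cᵀω` and `A` is symmetric, this
functional is symmetric. It vanishes on the kernel and on `ℝ^{ℓ×1}I + I*ℝ^{1×ℓ}` once it vanishes
on `Z`: that space is closed under `*`, so with `ω*Cω` it contains `ω*(C + Cᵀ)ω`, and
`Tr(A(C + Cᵀ)) = 2 Tr(AC)`.
-/

theorem _root_.Matrix.IsSymm.trace_mul_transpose {n R : Type*} [Fintype n] [AddCommMonoid R]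
    [Mul R] {A : Matrix n n R} (hA : A.IsSymm) (C : Matrix n n R) :
    (A * Cᵀ).trace = (A * C).trace := by
  conv_lhs => rw [← hA.eq]
  exact Matrix.trace_transpose_mul A C

theorem _root_.LinearMap.exists_factor_of_ker_le {R M N P : Type*} [Ring R] [AddCommGroup M]
    [AddCommGroup N] [AddCommGroup P] [Module R M] [Module R N] [Module R P]
    (f : M →ₗ[R] N) (ψ : M →ₗ[R] P) (h : LinearMap.ker f ≤ LinearMap.ker ψ)
    {V : Submodule R N} (hV : V ≤ LinearMap.range f) :
    ∃ L : V →ₗ[R] P, ∀ x (hx : f x ∈ V), L ⟨f x, hx⟩ = ψ x := by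
  refine ⟨(LinearMap.ker f).liftQ ψ h ∘ₗ f.quotKerEquivRange.symm.toLinearMap ∘ₗ
    Submodule.inclusion hV, fun x hx => ?_⟩
  change (LinearMap.ker f).liftQ ψ h (f.quotKerEquivRange.symm ⟨f x, hV hx⟩) = ψ x
  rw [LinearMap.quotKerEquivRange_symm_apply_image, Submodule.mkQ_apply, Submodule.liftQ_apply]

section Involution

variable {g : ℕ}

lemma wordStar_mul (u v : Word g) : wordStar (u * v) = wordStar v * wordStar u := by
  simp [wordStar, ← FreeMonoid.ofList_append]

lemma wordStar_wordStar (w : Word g) : wordStar (wordStar w) = w := by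
  simp [wordStar, List.map_reverse, Function.comp_def]

lemma ncStar_zero : ncStar (0 : NC g) = 0 :=
  congrArg MonoidAlgebra.ofCoeff Finsupp.mapDomain_zero

lemma ncStar_add (p q : NC g) : ncStar (p + q) = ncStar p + ncStar q :=
  congrArg MonoidAlgebra.ofCoeff Finsupp.mapDomain_add

noncomputable def ncStarₗ (g : ℕ) : NC g →ₗ[ℝ] NC g where
  toFun := ncStar
  map_add' := ncStar_add
  map_smul' r p := congrArg MonoidAlgebra.ofCoeff (Finsupp.mapDomain_smul r p.coeff)

lemma ncStar_sum {ι : Type*} (s : Finset ι) (f : ι → NC g) :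
    ncStar (∑ i ∈ s, f i) = ∑ i ∈ s, ncStar (f i) :=
  map_sum (ncStarₗ g) f s

lemma ncStar_single (w : Word g) (r : ℝ) :
    ncStar (MonoidAlgebra.single w r) = MonoidAlgebra.single (wordStar w) r :=
  congrArg MonoidAlgebra.ofCoeff Finsupp.mapDomain_single

lemma ncStar_ncStar (p : NC g) : ncStar (ncStar p) = p := by
  change MonoidAlgebra.ofCoeff (Finsupp.mapDomain wordStar (Finsupp.mapDomain wordStar p.coeff)) = p
  rw [← Finsupp.mapDomain_comp, show wordStar ∘ wordStar = (id : Word g → Word g) from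
    funext wordStar_wordStar, Finsupp.mapDomain_id, MonoidAlgebra.ofCoeff_coeff]

lemma ncStar_mul (p q : NC g) : ncStar (p * q) = ncStar q * ncStar p := by
  induction p using MonoidAlgebra.induction_linear with
  | zero => simp [ncStar_zero]
  | add a b ha hb => simp only [add_mul, mul_add, ncStar_add, ha, hb]
  | single w r =>
    induction q using MonoidAlgebra.induction_linear with
    | zero => simp [ncStar_zero]
    | add a b ha hb => simp only [add_mul, mul_add, ncStar_add, ha, hb]
    | single v s =>
      simp only [MonoidAlgebra.single_mul_single, ncStar_single, wordStar_mul, mul_comm s r]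

lemma ncStar_algebraMap (r : ℝ) : ncStar (algebraMap ℝ (NC g) r) = algebraMap ℝ (NC g) r :=
  ncStar_single 1 r

noncomputable def matStarₗ (g ν μ : ℕ) : NCMat g ν μ →ₗ[ℝ] NCMat g μ ν where
  toFun := matStar
  map_add' p q := Matrix.ext fun i j => ncStar_add (p j i) (q j i)
  map_smul' r p := Matrix.ext fun i j => (ncStarₗ g).map_smul r (p j i)

variable {ν μ ρ : ℕ}

@[simp] lemma matStarₗ_apply (p : NCMat g ν μ) : matStarₗ g ν μ p = matStar p := rfl

lemma matStar_matStar (p : NCMat g ν μ) : matStar (matStar p) = p :=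
  Matrix.ext fun i j => ncStar_ncStar (p i j)

lemma matStar_mul (p : NCMat g ν μ) (q : NCMat g μ ρ) :
    matStar (p * q) = matStar q * matStar p := by
  ext i j : 1
  simp only [matStar, Matrix.mul_apply, Matrix.of_apply, ncStar_sum, ncStar_mul]

lemma matStar_constMat (B : Matrix (Fin ν) (Fin μ) ℝ) :
    matStar (constMat (g := g) B) = constMat Bᵀ :=
  Matrix.ext fun i j => ncStar_algebraMap (B j i)

end Involution

lemma matStar_mem_realPart {g ℓ : ℕ} {I : Set (NCMat g 1 ℓ)} {w : NCMat g ℓ ℓ}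
    (hw : w ∈ realPart I) : matStar w ∈ realPart I := by
  change matStarₗ g ℓ ℓ w ∈ realPart I
  induction hw using Submodule.span_induction with
  | mem x hx =>
    apply Submodule.subset_span
    -- `realPart` multiplies with the `CStarMatrix` instance, which is `Matrix`'s only up to defeq.
    rcases hx with ⟨B, a, ha, rfl⟩ | ⟨B, a, ha, rfl⟩
    · exact Or.inr ⟨Bᵀ, a, ha,
        (matStar_mul (constMat B) a).trans (by rw [matStar_constMat]; rfl)⟩
    · exact Or.inl ⟨Bᵀ, a, ha,
        (matStar_mul (matStar a) (constMat B)).trans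
          (by rw [matStar_constMat, matStar_matStar]; rfl)⟩
  | zero => rw [map_zero]; exact zero_mem _
  | add x y _ _ hx hy => rw [map_add]; exact add_mem hx hy
  | smul r x _ hx => rw [map_smul]; exact Submodule.smul_mem _ r hx

section Gram

variable {g ℓ k : ℕ} (ω : Fin k → NCMat g 1 ℓ)

noncomputable def omegaCₗ : Matrix (Fin k) (Fin k) ℝ →ₗ[ℝ] NCMat g ℓ ℓ where
  toFun := omegaC ω
  map_add' C D := by simp [omegaC, add_smul, Finset.sum_add_distrib]
  map_smul' r C := by simp [omegaC, mul_smul, Finset.smul_sum]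

@[simp] lemma omegaCₗ_apply (C : Matrix (Fin k) (Fin k) ℝ) : omegaCₗ ω C = omegaC ω C := rfl

lemma omegaC_single (i j : Fin k) :
    omegaC ω (Matrix.single i j 1) = matStar (ω i) * ω j := by
  simp [omegaC, Matrix.single_apply, ite_and]

lemma matStar_omegaC (C : Matrix (Fin k) (Fin k) ℝ) :
    matStar (omegaC ω C) = omegaC ω Cᵀ := by
  change matStarₗ g ℓ ℓ (omegaC ω C) = _
  simp only [omegaC, map_sum, map_smul]
  rw [Finset.sum_comm]
  simp [matStarₗ, matStar_mul, matStar_matStar]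

lemma omegaC_mem_WW (C : Matrix (Fin k) (Fin k) ℝ) : omegaC ω C ∈ WW ω :=
  Submodule.sum_mem _ fun i _ => Submodule.sum_mem _ fun j _ =>
    Submodule.smul_mem _ _ (mem_WW ω i j)

lemma WW_eq_range_omegaCₗ : WW ω = LinearMap.range (omegaCₗ ω) := by
  refine le_antisymm (Submodule.span_le.2 ?_) (LinearMap.range_le_iff_comap.2 ?_)
  · rintro _ ⟨a, ha, b, hb, rfl⟩
    obtain ⟨s, rfl⟩ := (Submodule.mem_span_range_iff_exists_fun ℝ).1 ha
    obtain ⟨t, rfl⟩ := (Submodule.mem_span_range_iff_exists_fun ℝ).1 hb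
    refine ⟨Matrix.vecMulVec s t, ?_⟩
    change omegaC ω _ = matStarₗ g 1 ℓ _ * _
    simp only [omegaC, Matrix.vecMulVec_apply, mul_smul, map_sum, map_smul, matStarₗ_apply,
      Matrix.sum_mul, Matrix.mul_sum, Matrix.smul_mul, Matrix.mul_smul, Finset.smul_sum]
    rw [Finset.sum_comm]
    simp only [smul_comm (s _) (t _)]
  · exact Submodule.eq_top_iff'.2 fun C => omegaC_mem_WW ω C

end Gram

section Hankel

variable {g ℓ k : ℕ} {ω : Fin k → NCMat g 1 ℓ} {I : Set (NCMat g 1 ℓ)}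

lemma omegaC_add_transpose_mem_realPart {C : Matrix (Fin k) (Fin k) ℝ}
    (hC : omegaC ω C ∈ realPart I) : omegaC ω (C + Cᵀ) ∈ realPart I := by
  rw [← omegaCₗ_apply, map_add, omegaCₗ_apply, omegaCₗ_apply, ← matStar_omegaC]
  exact add_mem hC (matStar_mem_realPart hC)

lemma trace_mul_eq_zero_of_omegaC_mem_realPart {A : Matrix (Fin k) (Fin k) ℝ} (hA : Aᵀ = A)
    (hZ : ∀ C : Matrix (Fin k) (Fin k) ℝ, Cᵀ = C → omegaC ω C ∈ realPart I → (A * C).trace = 0)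
    {C : Matrix (Fin k) (Fin k) ℝ} (hC : omegaC ω C ∈ realPart I) : (A * C).trace = 0 := by
  have h := hZ (C + Cᵀ) (by rw [transpose_add, transpose_transpose, add_comm])
    (omegaC_add_transpose_mem_realPart hC)
  rw [Matrix.mul_add, trace_add, Matrix.IsSymm.trace_mul_transpose hA] at h
  linarith

end Hankel

theorem stmt15_general {g ℓ k : ℕ} (ω : Fin k → NCMat g 1 ℓ)
    (I : Set (NCMat g 1 ℓ))
    (A : Matrix (Fin k) (Fin k) ℝ) (hA : Aᵀ = A) :
    (∃ L : ↥(WW ω) →ₗ[ℝ] ℝ,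
        (∀ (w : NCMat g ℓ ℓ) (h1 : w ∈ WW ω) (h2 : matStar w ∈ WW ω),
          L ⟨matStar w, h2⟩ = L ⟨w, h1⟩) ∧
        (∀ (w : NCMat g ℓ ℓ) (h1 : w ∈ WW ω), w ∈ realPart I → L ⟨w, h1⟩ = 0) ∧
        (∀ i j : Fin k, L ⟨matStar (ω i) * ω j, mem_WW ω i j⟩ = A i j) ∧
        (∀ (C : Matrix (Fin k) (Fin k) ℝ) (hC : omegaC ω C ∈ WW ω),
          L ⟨omegaC ω C, hC⟩ = (A * C).trace)) ↔
      ∀ C : Matrix (Fin k) (Fin k) ℝ, Cᵀ = C →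
        omegaC ω C ∈ realPart I → (A * C).trace = 0 := by
  refine ⟨fun ⟨L, _, hvanish, _, htrace⟩ C _ hC => ?_, fun hZ => ?_⟩
  · rw [← htrace C (omegaC_mem_WW ω C)]
    exact hvanish _ _ hC
  have hvanish C := trace_mul_eq_zero_of_omegaC_mem_realPart (C := C) hA hZ
  have hWW := (WW_eq_range_omegaCₗ ω).le
  obtain ⟨L, hL⟩ := (omegaCₗ ω).exists_factor_of_ker_le (traceLinearMap _ ℝ ℝ ∘ₗ .mulLeft ℝ A)
    (fun C hC => hvanish C (by rw [← omegaCₗ_apply, LinearMap.mem_ker.1 hC]; exact zero_mem _))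
    hWW
  replace hL C hC : L ⟨omegaC ω C, hC⟩ = (A * C).trace := hL C hC
  refine ⟨L, fun w h1 h2 => ?_, fun w h1 hw => ?_, fun i j => ?_, hL⟩
  · obtain ⟨C, rfl⟩ := hWW h1
    simp_rw [omegaCₗ_apply, matStar_omegaC] at h2 ⊢
    rw [hL, hL, Matrix.IsSymm.trace_mul_transpose hA]
  · obtain ⟨C, rfl⟩ := hWW h1
    exact (hL C h1).trans (hvanish C hw)
  · convert hL (single i j 1) (omegaC_mem_WW ω _) using 2
    · exact Subtype.ext (omegaC_single ω i j).symm
    · simpa [trace_mul_single] using (Matrix.IsSymm.apply hA i j).symm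

/-- `A ∈ S^k` is the noncommutative Hankel matrix of some symmetric
linear functional `L` on `W*W` vanishing on `(ℝ^{ℓ×1}I + I*ℝ^{1×ℓ}) ∩ W*W` iff
`A ∈ Z^⊥`, where `Z = {C ∈ S^k : ω*Cω ∈ ℝ^{ℓ×1}I + I*ℝ^{1×ℓ}}`; and in that case
`L(ω*Cω) = Tr(AC)` for every `C`. -/
theorem stmt15 {g ℓ k : ℕ} (ω : Fin k → NCMat g 1 ℓ)
    (hω : LinearIndependent ℝ ω)
    (I : Set (NCMat g 1 ℓ)) (hI : IsLeftSubmodule I)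
    (A : Matrix (Fin k) (Fin k) ℝ) (hA : Aᵀ = A) :
    (∃ L : ↥(WW ω) →ₗ[ℝ] ℝ,
        (∀ (w : NCMat g ℓ ℓ) (h1 : w ∈ WW ω) (h2 : matStar w ∈ WW ω),
          L ⟨matStar w, h2⟩ = L ⟨w, h1⟩) ∧
        (∀ (w : NCMat g ℓ ℓ) (h1 : w ∈ WW ω), w ∈ realPart I → L ⟨w, h1⟩ = 0) ∧
        (∀ i j : Fin k, L ⟨matStar (ω i) * ω j, mem_WW ω i j⟩ = A i j) ∧
        (∀ (C : Matrix (Fin k) (Fin k) ℝ) (hC : omegaC ω C ∈ WW ω),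
          L ⟨omegaC ω C, hC⟩ = (A * C).trace)) ↔
      ∀ C : Matrix (Fin k) (Fin k) ℝ, Cᵀ = C →
        omegaC ω C ∈ realPart I → (A * C).trace = 0 :=
  stmt15_general ω I A hA

end NSS
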